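/- Recurrence relationship: for m ∈ ℕ, m ≥ 1, 𝔊_{n,q}^{(α)}(1/m, y) + ∑_{k=0}^n [n choose k]_q (1/m - 1)_q^{n-k} 𝔊_{k,q}^{(α)}(0,y) = 2[n]_q ∑_{k=0}^{n-1} [n-1 choose k]_q (1/m - 1)_q^{n-1-k} 𝔊_{k,q}^{(α-1)}(0,y), where (a+b)_q^m := ∑_{j=0}^m [m choose j]_q q^{j(j-1)/2} a^{m-j} b^j with a = 1/m, b = -1. -/

import Mathlib

open PowerSeries Finset

/-- The `q`-integer `[n]_q = 1 + q + ⋯ + q^(n-1)`. -/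
noncomputable def qInt (q : ℂ) (n : ℕ) : ℂ := ∑ i ∈ Finset.range n, q ^ i

/-- The `q`-factorial `[n]_q!`. -/
noncomputable def qFact (q : ℂ) : ℕ → ℂ
  | 0 => 1
  | n + 1 => qFact q n * qInt q (n + 1)

/-- The Gaussian (`q`-binomial) coefficient. -/
noncomputable def qBinom (q : ℂ) (n k : ℕ) : ℂ := qFact q n / (qFact q k * qFact q (n - k))

/-- The formal power series `e_q(tx) = ∑ x^n t^n/[n]_q!`. -/
noncomputable def qExpSeries (q : ℂ) (x : ℂ) : PowerSeries ℂ :=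
  PowerSeries.mk fun n => x ^ n / qFact q n

/-- The formal power series `E_q(ty) = ∑ q^(n(n-1)/2) y^n t^n/[n]_q!`. -/
noncomputable def qExpSeries' (q : ℂ) (y : ℂ) : PowerSeries ℂ :=
  PowerSeries.mk fun n => q ^ (n * (n - 1) / 2) * y ^ n / qFact q n

/-- Generating series `(2t/(e_q(t)+1))^α e_q(tx) E_q(ty)` of the `q`-Genocchi polynomials. -/
noncomputable def qGenocchiSeries (q : ℂ) (α : ℕ) (x y : ℂ) : PowerSeries ℂ :=
  (PowerSeries.C 2 * PowerSeries.X * (qExpSeries q 1 + 1)⁻¹) ^ α *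
    qExpSeries q x * qExpSeries' q y

/-- The `q`-Genocchi polynomial `𝔊_{n,q}^{(α)}(x,y)`. -/
noncomputable def qGenocchi (q : ℂ) (α : ℕ) (x y : ℂ) (n : ℕ) : ℂ :=
  qFact q n * PowerSeries.coeff n (qGenocchiSeries q α x y)

/-- The `q`-Bernoulli polynomial `𝔅_{n,q}(x,y)`, defined via
`(t/(e_q(t)-1)) e_q(tx) E_q(ty) = ∑ 𝔅_{n,q}(x,y) t^n/[n]_q!`
(note `t/(e_q(t)-1)` is the inverse of the series `∑ t^n/[n+1]_q!`). -/
noncomputable def qBernoulli (q : ℂ) (x y : ℂ) (n : ℕ) : ℂ :=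
  qFact q n * PowerSeries.coeff n
    ((PowerSeries.mk fun k => (qFact q (k + 1))⁻¹)⁻¹ * qExpSeries q x * qExpSeries' q y)

/-- The Gauss polynomial `(x+y)_q^n = ∑_k [n k]_q q^(k(k-1)/2) x^(n-k) y^k`. -/
noncomputable def qAddPow (q : ℂ) (x y : ℂ) (n : ℕ) : ℂ :=
  ∑ k ∈ Finset.range (n + 1), qBinom q n k * q ^ (k * (k - 1) / 2) * x ^ (n - k) * y ^ k

/-!
Multiplying the series of `𝔊^{(α)}_{n,q}(0,y)` by `e_q(ta) E_q(-t)` produces the `q`-binomial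
sum on the left (the coefficients of `e_q(ta) E_q(tb)` are the Gauss polynomials `(a+b)_q^n`).
Since `(1-1)_q^n = 0` for `n ≥ 1`, `e_q(t) E_q(-t) = 1`, so `e_q(ta) = e_q(ta) E_q(-t) e_q(t)`
and the left side is the coefficient of `e_q(ta) E_q(-t) (e_q(t) + 1)` times the series of
order `α`, which is `2t e_q(ta) E_q(-t)` times the series of order `α - 1`.
-/

section

variable {q : ℂ}

lemma qFact_succ (n : ℕ) : qFact q (n + 1) = qFact q n * qInt q (n + 1) := rfl

lemma qInt_zero : qInt q 0 = 0 := sum_range_zero _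

lemma qFact_ne_zero (hq : ∀ n : ℕ, qInt q (n + 1) ≠ 0) : ∀ n, qFact q n ≠ 0
  | 0 => one_ne_zero
  | n + 1 => mul_ne_zero (qFact_ne_zero hq n) (hq n)

lemma qBinom_mul_qFact_mul_qFact (hq : ∀ n : ℕ, qInt q (n + 1) ≠ 0) (n k : ℕ) :
    qBinom q n k * (qFact q k * qFact q (n - k)) = qFact q n :=
  div_mul_cancel₀ _ (mul_ne_zero (qFact_ne_zero hq k) (qFact_ne_zero hq (n - k)))

/-- Coefficients with respect to the basis `t^n/[n]_q!` multiply by the `q`-binomial rule. -/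
lemma qFact_mul_coeff_mul (hq : ∀ n : ℕ, qInt q (n + 1) ≠ 0) (f g : PowerSeries ℂ) (n : ℕ) :
    qFact q n * coeff n (f * g) =
      ∑ k ∈ range (n + 1),
        qBinom q n k * (qFact q (n - k) * coeff (n - k) f) * (qFact q k * coeff k g) := by
  rw [mul_comm f g, coeff_mul, Nat.sum_antidiagonal_eq_sum_range_succ_mk, mul_sum]
  refine sum_congr rfl fun k _ => ?_
  rw [← qBinom_mul_qFact_mul_qFact hq n k]
  ring

lemma qFact_mul_coeff_succ_X_mul (f : PowerSeries ℂ) (n : ℕ) :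
    qFact q (n + 1) * coeff (n + 1) (X * f) = qInt q (n + 1) * (qFact q n * coeff n f) := by
  rw [coeff_succ_X_mul, qFact_succ]
  ring

lemma qFact_mul_coeff_qExpSeries_mul_qExpSeries' (hq : ∀ n : ℕ, qInt q (n + 1) ≠ 0)
    (a b : ℂ) (n : ℕ) :
    qFact q n * coeff n (qExpSeries q a * qExpSeries' q b) = qAddPow q a b n := by
  rw [qFact_mul_coeff_mul hq, qAddPow]
  refine sum_congr rfl fun k _ => ?_
  simp only [qExpSeries, qExpSeries', coeff_mk, mul_div_cancel₀ _ (qFact_ne_zero hq _)]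
  ring

lemma qFact_mul_coeff_qExpSeries_mul_qExpSeries'_mul (hq : ∀ n : ℕ, qInt q (n + 1) ≠ 0)
    (a b : ℂ) (f : PowerSeries ℂ) (n : ℕ) :
    qFact q n * coeff n (qExpSeries q a * qExpSeries' q b * f) =
      ∑ k ∈ range (n + 1), qBinom q n k * qAddPow q a b (n - k) * (qFact q k * coeff k f) := by
  simp only [qFact_mul_coeff_mul hq _ f, qFact_mul_coeff_qExpSeries_mul_qExpSeries' hq]

lemma qFact_mul_qInt_add_eq_qBinom_succ {n k : ℕ} (hk : k ≤ n + 1) :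
    qFact q n * (qInt q k + q ^ k * qInt q (n + 1 - k)) / (qFact q k * qFact q (n + 1 - k)) =
      qBinom q (n + 1) k := by
  have hsplit : qInt q (n + 1) = qInt q k + q ^ k * qInt q (n + 1 - k) := by
    conv_lhs => rw [← Nat.add_sub_cancel' hk]
    simp only [qInt, sum_range_add, mul_sum, pow_add]
  rw [qBinom, qFact_succ, hsplit]

/-- By the `q`-Pascal rule `[n+1, k] = [n, k-1] + q^k [n, k]` the terms cancel in pairs. The rule is
used in the form `qFact_mul_qInt_add_eq_qBinom_succ`, whose summands vanish at `k = 0` and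
`k = n + 1`, because the junk value `qBinom q n (n + 1) = 1 / [n+1]_q` is not `0`. -/
lemma qAddPow_one_neg_one_succ (hq : ∀ n : ℕ, qInt q (n + 1) ≠ 0) (n : ℕ) :
    qAddPow q 1 (-1) (n + 1) = 0 := by
  set s : ℕ → ℂ := fun k => q ^ (k * (k - 1) / 2) * (-1) ^ k
  set d : ℕ → ℂ := fun k => qFact q k * qFact q (n + 1 - k)
  have hs : ∀ k, s (k + 1) = -(q ^ k * s k) := fun k => by
    simp only [s, Nat.triangle_succ, pow_add, pow_succ]
    ring
  have hL : ∀ k ≤ n, qFact q n * qInt q (k + 1) / d (k + 1) = qBinom q n k := fun k hk => by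
    dsimp only [d]
    rw [qBinom, show n + 1 - (k + 1) = n - k by omega, qFact_succ, mul_right_comm (qFact q k),
      mul_div_mul_right _ _ (hq k)]
  have hR : ∀ k ≤ n, qFact q n * qInt q (n + 1 - k) / d k = qBinom q n k := fun k hk => by
    dsimp only [d]
    rw [qBinom, show n + 1 - k = n - k + 1 by omega, qFact_succ, ← mul_assoc,
      mul_div_mul_right _ _ (hq _)]
  calc qAddPow q 1 (-1) (n + 1)
      = ∑ k ∈ range (n + 2), (qFact q n * qInt q k / d k * s k
          + q ^ k * (qFact q n * qInt q (n + 1 - k) / d k) * s k) := by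
        refine sum_congr rfl fun k hk => ?_
        rw [← qFact_mul_qInt_add_eq_qBinom_succ (Nat.lt_succ_iff.mp (mem_range.mp hk))]
        simp only [s, d, one_pow]
        ring
    _ = ∑ k ∈ range (n + 1), qBinom q n k * (s (k + 1) + q ^ k * s k) := by
        rw [sum_add_distrib, sum_range_succ', sum_range_succ (fun k => q ^ k * _ * s k)]
        simp only [qInt_zero, Nat.sub_self, mul_zero, zero_div, zero_mul, add_zero]
        rw [← sum_add_distrib]
        refine sum_congr rfl fun k hk => ?_
        have hk : k ≤ n := Nat.lt_succ_iff.mp (mem_range.mp hk)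
        rw [hL k hk, hR k hk]
        ring
    _ = 0 := sum_eq_zero fun k _ => by rw [hs, neg_add_cancel, mul_zero]

lemma qExpSeries_one_mul_qExpSeries'_neg_one (hq : ∀ n : ℕ, qInt q (n + 1) ≠ 0) :
    qExpSeries q 1 * qExpSeries' q (-1) = 1 := by
  ext n
  rw [← mul_right_inj' (qFact_ne_zero hq n), qFact_mul_coeff_qExpSeries_mul_qExpSeries' hq]
  cases n with
  | zero => simp [qAddPow, qBinom, qFact]
  | succ n => simp [qAddPow_one_neg_one_succ hq]

lemma qExpSeries_zero : qExpSeries q 0 = 1 := by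
  ext n
  cases n <;> simp [qExpSeries, qFact, coeff_one]

lemma qGenocchiSeries_eq_qExpSeries_mul (α : ℕ) (x y : ℂ) :
    qGenocchiSeries q α x y = qExpSeries q x * qGenocchiSeries q α 0 y := by
  simp only [qGenocchiSeries, qExpSeries_zero]
  ring

lemma qExpSeries_one_add_one_mul_qGenocchiSeries_succ (β : ℕ) (y : ℂ) :
    (qExpSeries q 1 + 1) * qGenocchiSeries q (β + 1) 0 y = C 2 * X * qGenocchiSeries q β 0 y := by
  have hunit : (qExpSeries q 1 + 1) * (qExpSeries q 1 + 1)⁻¹ = 1 :=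
    PowerSeries.mul_inv_cancel _ (by simp [qExpSeries, qFact])
  have hsucc : qGenocchiSeries q (β + 1) 0 y =
      C 2 * X * (qExpSeries q 1 + 1)⁻¹ * qGenocchiSeries q β 0 y := by
    simp only [qGenocchiSeries, pow_succ]
    ring
  rw [hsucc]
  linear_combination (C 2 * X * qGenocchiSeries q β 0 y) * hunit

/-- Generating-function form of the recurrence. -/
lemma qGenocchiSeries_succ_add (hq : ∀ n : ℕ, qInt q (n + 1) ≠ 0) (β : ℕ) (a y : ℂ) :
    qGenocchiSeries q (β + 1) a y
        + qExpSeries q a * qExpSeries' q (-1) * qGenocchiSeries q (β + 1) 0 y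
      = C 2 * X * (qExpSeries q a * qExpSeries' q (-1) * qGenocchiSeries q β 0 y) := by
  rw [mul_left_comm (C 2 * X), ← qExpSeries_one_add_one_mul_qGenocchiSeries_succ,
    qGenocchiSeries_eq_qExpSeries_mul _ a]
  linear_combination (-(qExpSeries q a * qGenocchiSeries q (β + 1) 0 y)) *
    qExpSeries_one_mul_qExpSeries'_neg_one hq

end

theorem qGenocchi_recurrence_general (q : ℂ) (hq : ∀ n : ℕ, qInt q (n + 1) ≠ 0)
    (α : ℕ) (hα : 1 ≤ α) (m : ℕ) (n : ℕ) (y : ℂ) :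
    qGenocchi q α ((m : ℂ)⁻¹) y n +
      ∑ k ∈ Finset.range (n + 1),
        qBinom q n k * qAddPow q ((m : ℂ)⁻¹) (-1) (n - k) * qGenocchi q α 0 y k =
    2 * qInt q n *
      ∑ k ∈ Finset.range n,
        qBinom q (n - 1) k * qAddPow q ((m : ℂ)⁻¹) (-1) (n - 1 - k) *
          qGenocchi q (α - 1) 0 y k := by
  obtain ⟨β, rfl⟩ : ∃ β, α = β + 1 := ⟨α - 1, by omega⟩
  set P := qExpSeries q ((m : ℂ)⁻¹) * qExpSeries' q (-1)
  have hsum : ∀ γ n, ∑ k ∈ range (n + 1),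
      qBinom q n k * qAddPow q ((m : ℂ)⁻¹) (-1) (n - k) * qGenocchi q γ 0 y k =
        qFact q n * coeff n (P * qGenocchiSeries q γ 0 y) := fun γ n =>
    (qFact_mul_coeff_qExpSeries_mul_qExpSeries'_mul hq _ _ _ n).symm
  calc _ = qFact q n * coeff n
        (qGenocchiSeries q (β + 1) (m : ℂ)⁻¹ y + P * qGenocchiSeries q (β + 1) 0 y) := by
        rw [hsum, map_add, mul_add, qGenocchi]
    _ = qFact q n * coeff n (C 2 * X * (P * qGenocchiSeries q β 0 y)) := by
        rw [qGenocchiSeries_succ_add hq]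
    _ = _ := by
        cases n with
        | zero => simp [qInt_zero, mul_assoc]
        | succ n =>
          simp only [Nat.add_sub_cancel]
          rw [mul_comm (C 2), mul_assoc, qFact_mul_coeff_succ_X_mul, coeff_C_mul, hsum]
          ring

/-- Recurrence relationship for the `q`-Genocchi polynomials. -/
theorem qGenocchi_recurrence (q : ℂ) (hq : ∀ n : ℕ, qInt q (n + 1) ≠ 0)
    (α : ℕ) (hα : 1 ≤ α) (m : ℕ) (hm : 1 ≤ m) (n : ℕ) (y : ℂ) :
    qGenocchi q α ((m : ℂ)⁻¹) y n +
      ∑ k ∈ Finset.range (n + 1),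
        qBinom q n k * qAddPow q ((m : ℂ)⁻¹) (-1) (n - k) * qGenocchi q α 0 y k =
    2 * qInt q n *
      ∑ k ∈ Finset.range n,
        qBinom q (n - 1) k * qAddPow q ((m : ℂ)⁻¹) (-1) (n - 1 - k) *
          qGenocchi q (α - 1) 0 y k :=
  qGenocchi_recurrence_general q hq α hα m n y
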